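/- With all parameters a₁,…,a_ℓ distinct, the functions F_i(z,w) = Σ_{k≠i} |Φ_{i,k}|²/(a_i − a_k) + |z_i|², where Φ_{i,k} = (1/2)(w_i conj(z_k) − z_i conj(w_k)) + (i s/4)(k_i + k_k) z_i conj(z_k) and a_i = s² k_i²/16, satisfy the identity F₁ + ⋯ + F_ℓ = 1 on the set {|z|² = 1, Re⟨w,z⟩ = 0}. -/
import Mathlib


/-- The `(i,k)` entry of the magnetic momentum map `Φ_s^{u(ℓ)}`:
`Φ_{i,k} = (1/2)(wᵢ z̄ₖ − zᵢ w̄ₖ) + (is/4)(kᵢ + kₖ) zᵢ z̄ₖ`. -/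
noncomputable def phiEntry {ℓ : ℕ} (s : ℝ) (K : Fin ℓ → ℝ) (z w : Fin ℓ → ℂ)
    (i k : Fin ℓ) : ℂ :=
  (1 / 2 : ℂ) * (w i * (starRingEnd ℂ) (z k) - z i * (starRingEnd ℂ) (w k))
    + Complex.I * s / 4 * ((K i : ℂ) + (K k : ℂ)) * z i * (starRingEnd ℂ) (z k)

lemma phiEntry_antisym {ℓ : ℕ} (s : ℝ) (K : Fin ℓ → ℝ) (z w : Fin ℓ → ℂ)
    (i k : Fin ℓ) : phiEntry s K z w k i = - (starRingEnd ℂ) (phiEntry s K z w i k) := by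
  simp only [phiEntry, map_add, map_mul, map_sub, map_div₀, Complex.conj_I,
    Complex.conj_ofReal, Complex.conj_conj, map_one, map_ofNat]
  ring

/-- with all `aᵢ = s²kᵢ²/16` distinct, the functions
`Fᵢ = Σ_{k≠i} |Φ_{i,k}|²/(aᵢ − aₖ) + |zᵢ|²` satisfy `F₁ + ⋯ + F_ℓ = 1`
on the constraint set `{|z|² = 1, Re⟨w,z⟩ = 0}`. -/
theorem sum_of_quadratic_integrals_eq_one
    (ℓ : ℕ) (hℓ : 1 ≤ ℓ) (s : ℝ) (K : Fin ℓ → ℝ)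
    (a : Fin ℓ → ℝ) (ha : ∀ i, a i = s ^ 2 * (K i) ^ 2 / 16)
    (hdist : Function.Injective a)
    (z w : Fin ℓ → ℂ)
    (hnorm : ∑ i, Complex.normSq (z i) = 1)
    (hperp : ∑ i, ((starRingEnd ℂ) (w i) * z i + w i * (starRingEnd ℂ) (z i)) = 0) :
    ∑ i, ((∑ k ∈ Finset.univ \ {i},
        Complex.normSq (phiEntry s K z w i k) / (a i - a k))
      + Complex.normSq (z i)) = 1 := by
  rw [Finset.sum_add_distrib, hnorm]
  have hext : ∀ i : Fin ℓ, (∑ k ∈ Finset.univ \ {i},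
      Complex.normSq (phiEntry s K z w i k) / (a i - a k))
      = ∑ k, Complex.normSq (phiEntry s K z w i k) / (a i - a k) := by
    intro i
    rw [Finset.sum_sdiff_eq_sub (Finset.subset_univ _), Finset.sum_singleton]
    simp
  have hanti : ∀ i k : Fin ℓ,
      Complex.normSq (phiEntry s K z w i k) / (a i - a k)
      = - (Complex.normSq (phiEntry s K z w k i) / (a k - a i)) := by
    intro i k
    rw [phiEntry_antisym s K z w i k, Complex.normSq_neg, Complex.normSq_conj]
    by_cases h : i = k
    · subst h; simp
    · rw [show a k - a i = -(a i - a k) by ring, div_neg, neg_neg]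
  have hzero : (∑ i : Fin ℓ, ∑ k : Fin ℓ,
      Complex.normSq (phiEntry s K z w i k) / (a i - a k)) = 0 := by
    set S := ∑ i : Fin ℓ, ∑ k : Fin ℓ,
      Complex.normSq (phiEntry s K z w i k) / (a i - a k) with hS
    have : S = -S := by
      calc S = ∑ i : Fin ℓ, ∑ k : Fin ℓ,
          -(Complex.normSq (phiEntry s K z w k i) / (a k - a i)) := by
            apply Finset.sum_congr rfl; intro i _
            apply Finset.sum_congr rfl; intro k _
            exact hanti i k
        _ = -∑ i : Fin ℓ, ∑ k : Fin ℓ,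
          Complex.normSq (phiEntry s K z w k i) / (a k - a i) := by
            simp [Finset.sum_neg_distrib]
        _ = -S := by rw [Finset.sum_comm]
    linarith
  simp only [hext]
  rw [hzero]
  ring
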